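/- A positive integer n is a cyclic number (i.e., every group of order n is cyclic) if and only if n is square-free and has nilpotent factorization. -/

import Mathlib

/-!
A prime `p` divides `φ n` iff `p ^ 2 ∣ n` or `p ∣ q - 1` for some prime `q ∣ n`; hence `n` is
square-free with nilpotent factorization iff `gcd(n, φ n) = 1`.

If `p ^ 2 ∣ n`, then `C_p × C_p`, and if `p ∣ q - 1` with `p, q ∣ n`, then the nonabelian
`C_q ⋊ C_p`, times a cyclic factor, is a noncyclic group of order `n`.
Conversely, if `gcd(n, φ n) = 1` then `n` is square-free, so a group `G` of order `n` is a Z-group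
and its commutator subgroup `C` is cyclic. `G` acts on `C` through `Aut C`, whose order
`φ |C|` divides `φ n` and is therefore coprime to `n`; so `C` is central. As `G ⧸ C` is cyclic,
`G` is abelian, and an abelian Z-group is cyclic.
-/

/-- A positive integer `n` with prime factorization `p₁^a₁ ⋯ p_r^a_r` has *nilpotent
factorization* if `pᵢ ∤ p_j^k - 1` for all `i ≠ j` and all `1 ≤ k ≤ a_j`. -/
def HasNilpotentFactorization (n : ℕ) : Prop :=
  ∀ p ∈ n.primeFactors, ∀ q ∈ n.primeFactors, p ≠ q →
    ∀ k : ℕ, 1 ≤ k → k ≤ n.factorization q → ¬ (p ∣ q ^ k - 1)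

section Arithmetic

open Nat

theorem Nat.Prime.dvd_totient_iff {p n : ℕ} (hp : p.Prime) :
    p ∣ φ n ↔ p ^ 2 ∣ n ∨ ∃ q, q.Prime ∧ q ∣ n ∧ p ∣ q - 1 := by
  constructor
  · intro h
    rcases eq_or_ne n 0 with rfl | hn
    · exact .inl (dvd_zero _)
    rw [totient_eq_prod_factorization hn, Prime.dvd_finsuppProd_iff hp.prime] at h
    obtain ⟨q, hq, hpq⟩ := h
    rw [support_factorization] at hq
    have hqp := prime_of_mem_primeFactors hq
    rcases hp.dvd_mul.mp hpq with hpow | hsub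
    · have hk : n.factorization q - 1 ≠ 0 := by
        rintro hk
        rw [hk, pow_zero] at hpow
        exact hp.not_dvd_one hpow
      obtain rfl := (prime_dvd_prime_iff_eq hp hqp).mp (hp.dvd_of_dvd_pow hpow)
      exact .inl ((hp.pow_dvd_iff_le_factorization hn).mpr (by omega))
    · exact .inr ⟨q, hqp, dvd_of_mem_primeFactors hq, hsub⟩
  · rintro (h | ⟨q, hq, hqn, h⟩)
    · have h' := totient_dvd_of_dvd h
      rw [totient_prime_pow hp two_pos] at h'
      exact (dvd_mul_of_dvd_left (dvd_pow_self p (by norm_num)) _).trans h'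
    · exact h.trans (totient_prime hq ▸ totient_dvd_of_dvd hqn)

theorem Nat.Prime.lt_of_dvd_sub_one {p q : ℕ} (hq : q.Prime) (h : p ∣ q - 1) : p < q :=
  (Nat.le_of_dvd (Nat.sub_pos_of_lt hq.one_lt) h).trans_lt (Nat.sub_lt hq.pos one_pos)

theorem Nat.coprime_totient_iff_squarefree_and_hasNilpotentFactorization {n : ℕ} :
    n.Coprime (φ n) ↔ Squarefree n ∧ HasNilpotentFactorization n := by
  constructor
  · intro h
    have hsq : Squarefree n := by
      refine squarefree_iff_prime_squarefree.mpr fun p hp hpp => ?_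
      refine Nat.Prime.not_coprime_iff_dvd.mpr ⟨p, hp, dvd_of_mul_right_dvd hpp, ?_⟩ h
      exact hp.dvd_totient_iff.mpr (.inl (sq p ▸ hpp))
    refine ⟨hsq, fun p hp q hq _ k hk hkq hpq => ?_⟩
    obtain rfl : k = 1 := by have := hsq.natFactorization_le_one q; omega
    have hp' := prime_of_mem_primeFactors hp
    refine Nat.Prime.not_coprime_iff_dvd.mpr ⟨p, hp', dvd_of_mem_primeFactors hp, ?_⟩ h
    exact hp'.dvd_totient_iff.mpr
      (.inr ⟨q, prime_of_mem_primeFactors hq, dvd_of_mem_primeFactors hq, pow_one q ▸ hpq⟩)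
  · rintro ⟨hsq, hnf⟩
    refine coprime_of_dvd fun p hp hpn hpφ => ?_
    rcases hp.dvd_totient_iff.mp hpφ with hp2 | ⟨q, hq, hqn, hpq⟩
    · exact squarefree_iff_prime_squarefree.mp hsq p hp (sq p ▸ hp2)
    · have hqf : 1 ≤ n.factorization q := (hq.dvd_iff_one_le_factorization hsq.ne_zero).mp hqn
      exact hnf p (mem_primeFactors.mpr ⟨hp, hpn, hsq.ne_zero⟩) q
        (mem_primeFactors.mpr ⟨hq, hqn, hsq.ne_zero⟩) (hq.lt_of_dvd_sub_one hpq).ne 1 le_rfl hqf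
        (by rwa [pow_one])

end Arithmetic

theorem Nat.card_multiplicative (α : Type*) : Nat.card (Multiplicative α) = Nat.card α :=
  Nat.card_congr Multiplicative.toAdd

theorem SemidirectProduct.eq_one_of_isMulCommutative {N G : Type*} [Group N] [Group G]
    {ψ : G →* MulAut N} [IsMulCommutative (N ⋊[ψ] G)] : ψ = 1 := by
  ext g n
  apply inl_injective (G := G) (φ := ψ)
  rw [inl_aut, IsMulCommutative.is_comm.comm (inr g), mul_assoc, ← map_mul, mul_inv_cancel,
    map_one, mul_one]
  rfl

theorem MonoidHom.eq_one_of_coprime_card {G K : Type*} [Group G] [Group K] (f : G →* K)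
    (h : (Nat.card G).Coprime (Nat.card K)) : f = 1 := by
  rw [← f.range_eq_bot_iff, ← Subgroup.card_eq_one]
  exact Nat.eq_one_of_dvd_coprimes h (Subgroup.card_range_dvd f) f.range.card_subgroup_dvd_card

theorem Subgroup.le_center_of_coprime_card_mulAut {G : Type*} [Group G] (H : Subgroup G)
    [H.Normal] (h : (Nat.card G).Coprime (Nat.card (MulAut H))) : H ≤ center G := by
  intro x hx
  rw [mem_center_iff]
  intro g
  have hconj := DFunLike.congr_fun (DFunLike.congr_fun
    ((MulAut.conjNormal (H := H)).eq_one_of_coprime_card h) g) ⟨x, hx⟩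
  have := congrArg Subtype.val hconj
  rw [MulAut.conjNormal_apply] at this
  exact mul_inv_eq_iff_eq_mul.mp this

theorem isCyclic_of_coprime_card_totient {G : Type*} [Group G] [Finite G]
    (h : (Nat.card G).Coprime (Nat.card G).totient) : IsCyclic G := by
  have := IsZGroup.of_squarefree
    (Nat.coprime_totient_iff_squarefree_and_hasNilpotentFactorization.mp h).1
  have hC : commutator G ≤ Subgroup.center G := by
    apply Subgroup.le_center_of_coprime_card_mulAut
    have := IsZGroup.isCyclic_commutator G
    rw [IsCyclic.card_mulAut]
    exact h.coprime_dvd_right (Nat.totient_dvd_of_dvd (commutator G).card_subgroup_dvd_card)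
  let _ : CommGroup G :=
    commGroupOfCyclicCenterQuotient Abelianization.of ((Abelianization.ker_of G).le.trans hC)
  exact IsCyclic.of_exponent_eq_card (IsZGroup.exponent_eq_card G)

def IsCyclicNumber (n : ℕ) : Prop :=
  ∀ (G : Type) [Group G] [Finite G], Nat.card G = n → IsCyclic G

theorem isCyclicNumber_iff_forall_fintype {n : ℕ} : IsCyclicNumber n ↔
    ∀ (G : Type) [Group G] [Fintype G], Fintype.card G = n → IsCyclic G := by
  refine ⟨fun h G _ _ hG => h G (Nat.card_eq_fintype_card.trans hG), fun h G _ _ hG => ?_⟩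
  have := Fintype.ofFinite G
  exact h G (Nat.card_eq_fintype_card.symm.trans hG)

theorem IsCyclicNumber.of_dvd {n d : ℕ} (h : IsCyclicNumber n) (hd : d ∣ n) (hn : n ≠ 0) :
    IsCyclicNumber d := by
  obtain ⟨k, rfl⟩ := hd
  have : NeZero k := ⟨right_ne_zero_of_mul hn⟩
  intro G _ _ hG
  have := h (G × Multiplicative (ZMod k))
    (by rw [Nat.card_prod, hG, Nat.card_multiplicative, Nat.card_zmod])
  exact isCyclic_left_of_prod G (Multiplicative (ZMod k))

theorem not_isCyclicNumber_mul_self {m : ℕ} (hm : 1 < m) : ¬ IsCyclicNumber (m * m) := by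
  have : NeZero m := ⟨by omega⟩
  intro h
  have := h (Multiplicative (ZMod m) × Multiplicative (ZMod m))
    (by rw [Nat.card_prod, Nat.card_multiplicative, Nat.card_zmod])
  have hcop := coprime_card_of_isCyclic_prod (Multiplicative (ZMod m)) (Multiplicative (ZMod m))
  rw [Nat.card_multiplicative, Nat.card_zmod, Nat.coprime_self] at hcop
  omega

theorem not_isCyclicNumber_mul_of_prime_dvd_card_mulAut {N : Type} [Group N] [Finite N] {p : ℕ}
    (hp : p.Prime) (h : p ∣ Nat.card (MulAut N)) : ¬ IsCyclicNumber (Nat.card N * p) := by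
  have : Fact p.Prime := ⟨hp⟩
  obtain ⟨σ, hσ⟩ := exists_prime_orderOf_dvd_card' p h
  let H := Subgroup.zpowers σ
  have hcard : Nat.card (N ⋊[H.subtype] H) = Nat.card N * p := by
    rw [SemidirectProduct.card, Nat.card_zpowers, hσ]
  have : Finite (N ⋊[H.subtype] H) :=
    Nat.finite_of_card_ne_zero (hcard ▸ mul_ne_zero Nat.card_pos.ne' hp.ne_zero)
  intro hcyc
  have := (hcyc _ hcard).isMulCommutative
  have hσ1 : σ = 1 := by
    simpa using DFunLike.congr_fun (SemidirectProduct.eq_one_of_isMulCommutative (ψ := H.subtype))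
      (⟨σ, Subgroup.mem_zpowers σ⟩ : H)
  rw [hσ1, orderOf_one] at hσ
  exact hp.one_lt.ne hσ

theorem isCyclicNumber_iff_coprime_totient {n : ℕ} (hn : n ≠ 0) :
    IsCyclicNumber n ↔ n.Coprime n.totient := by
  refine ⟨fun h => ?_, fun h G _ _ hG => isCyclic_of_coprime_card_totient (hG ▸ h)⟩
  refine Nat.coprime_of_dvd fun p hp hpn hpφ => ?_
  rcases hp.dvd_totient_iff.mp hpφ with hp2 | ⟨q, hq, hqn, hpq⟩
  · exact not_isCyclicNumber_mul_self hp.one_lt (h.of_dvd (sq p ▸ hp2) hn)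
  · have : NeZero q := ⟨hq.ne_zero⟩
    have hcard : Nat.card (MulAut (Multiplicative (ZMod q))) = q - 1 := by
      rw [IsCyclic.card_mulAut, Nat.card_multiplicative, Nat.card_zmod, Nat.totient_prime hq]
    have hcop : q.Coprime p := (Nat.coprime_primes hq hp).mpr (hq.lt_of_dvd_sub_one hpq).ne'
    refine not_isCyclicNumber_mul_of_prime_dvd_card_mulAut hp (hcard ▸ hpq) (h.of_dvd ?_ hn)
    rw [Nat.card_multiplicative, Nat.card_zmod]
    exact hcop.mul_dvd_of_dvd_of_dvd hqn hpn

/-- A positive integer `n` is a cyclic number (every group of order `n` is cyclic)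
iff `n` is square-free and has nilpotent factorization. -/
theorem cyclic_number_iff_squarefree_nilpotentFactorization (n : ℕ) (hn : 0 < n) :
    (∀ (G : Type) [Group G] [Fintype G], Fintype.card G = n → IsCyclic G) ↔
      ((∀ p : ℕ, p.Prime → ¬ (p ^ 2 ∣ n)) ∧ HasNilpotentFactorization n) := by
  rw [← isCyclicNumber_iff_forall_fintype, isCyclicNumber_iff_coprime_totient hn.ne',
    Nat.coprime_totient_iff_squarefree_and_hasNilpotentFactorization,
    Nat.squarefree_iff_prime_squarefree]
  simp only [sq]
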